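/- arXiv:1709.03320 — 2 statements merged into one kernel-verified Lean document; each statement's English description precedes it below -/
import Mathlib

section
/- For the root system of type D_n with simple system Δ = {e_{i+1} − e_i : i ∈ [n−1]} ∪ {e_1 + e_2}, the heights of positive roots are ht(e_j − e_i) = j − i for i < j and ht(e_i + e_j) = i + j − 2 for i < j. Consequently, for an even signed permutation σ ∈ D_n, L_{Φ(Δ)}(σ) = oinv(σ) + onsp(σ). -/
open Finset

/-- The hyperoctahedral group `B_n` of signed permutations, encoded as a pair
consisting of the underlying permutation of positions and the signs of the entries. -/
abbrev BG (n : ℕ) := Equiv.Perm (Fin n) × (Fin n → Bool)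

/-- The window notation value `σ(i)` (1-based values, 0-based positions). -/
def wval {n : ℕ} (σ : BG n) (i : Fin n) : ℤ :=
  (if σ.2 i then -1 else 1) * ((σ.1 i : ℤ) + 1)

def pairsF (n : ℕ) : Finset (Fin n × Fin n) := univ.filter fun p => p.1 < p.2

/-- number of inversions -/
def invB {n : ℕ} (σ : BG n) : ℕ :=
  ((pairsF n).filter fun p => wval σ p.2 < wval σ p.1).card

/-- number of odd inversions -/
def oinvB {n : ℕ} (σ : BG n) : ℕ :=
  ((pairsF n).filter fun p => wval σ p.2 < wval σ p.1 ∧ (p.2.val - p.1.val) % 2 = 1).card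

/-- number of even inversions -/
def einvB {n : ℕ} (σ : BG n) : ℕ :=
  ((pairsF n).filter fun p => wval σ p.2 < wval σ p.1 ∧ (p.2.val - p.1.val) % 2 = 0).card

/-- number of negative sum pairs -/
def nspB {n : ℕ} (σ : BG n) : ℕ :=
  ((pairsF n).filter fun p => wval σ p.1 + wval σ p.2 < 0).card

/-- number of odd negative sum pairs -/
def onspB {n : ℕ} (σ : BG n) : ℕ :=
  ((pairsF n).filter fun p => wval σ p.1 + wval σ p.2 < 0 ∧ (p.2.val - p.1.val) % 2 = 1).card

/-- number of even negative sum pairs -/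
def enspB {n : ℕ} (σ : BG n) : ℕ :=
  ((pairsF n).filter fun p => wval σ p.1 + wval σ p.2 < 0 ∧ (p.2.val - p.1.val) % 2 = 0).card

/-- number of negative entries -/
def nnegB {n : ℕ} (σ : BG n) : ℕ :=
  (univ.filter fun i : Fin n => wval σ i < 0).card

/-- number of negative entries in odd (1-based) positions -/
def onegB {n : ℕ} (σ : BG n) : ℕ :=
  (univ.filter fun i : Fin n => wval σ i < 0 ∧ (i.val + 1) % 2 = 1).card

/-- number of negative entries in even (1-based) positions -/
def enegB {n : ℕ} (σ : BG n) : ℕ :=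
  (univ.filter fun i : Fin n => wval σ i < 0 ∧ (i.val + 1) % 2 = 0).card

/-- Coxeter length of type B -/
def lenB {n : ℕ} (σ : BG n) : ℕ := invB σ + nnegB σ + nspB σ

/-- Coxeter length of type D -/
def lenD {n : ℕ} (σ : BG n) : ℕ := invB σ + nspB σ

/-- the standard basis vector `e_i` of `ℝ^n` -/
def ee {n : ℕ} (i : Fin n) : Fin n → ℝ := fun j => if j = i then 1 else 0

/-- the action of a signed permutation on `ℝ^n`, with
`σ(e_i) = sign(σ(i)) e_{|σ(i)|}` -/
def actBG {n : ℕ} (σ : BG n) (v : Fin n → ℝ) : Fin n → ℝ :=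
  fun j => (if σ.2 (σ.1.symm j) then -1 else 1) * v (σ.1.symm j)

/-- the simple system of type `D_n`: `e_1 + e_2` together with `e_{i+1} - e_i` -/
def deltaD (m : ℕ) : Fin (m + 2) → (Fin (m + 2) → ℝ) := fun k =>
  if k.val = 0 then ee 0 + ee 1
  else ee k - ee ⟨k.val - 1, Nat.lt_of_le_of_lt (Nat.sub_le _ _) k.isLt⟩

/-- positive roots of type `D` -/
def posD (n : ℕ) : Set (Fin n → ℝ) :=
  {v | (∃ i j : Fin n, i < j ∧ v = ee j - ee i) ∨
    (∃ i j : Fin n, i < j ∧ v = ee i + ee j)}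

/-- negative roots of type `D` -/
def negD (n : ℕ) : Set (Fin n → ℝ) := {v | -v ∈ posD n}

/-- `v` has odd height with respect to the type `D` simple system -/
def OddHtD (m : ℕ) (v : Fin (m + 2) → ℝ) : Prop :=
  ∀ c : Fin (m + 2) → ℝ, v = ∑ k, c k • deltaD m k → ∃ t : ℤ, Odd t ∧ ∑ k, c k = (t : ℝ)

/-- the odd length: the number of positive roots of odd height sent to negative
roots -/
noncomputable def LD (m : ℕ) (σ : BG (m + 2)) : ℕ :=
  Set.ncard {v | v ∈ posD (m + 2) ∧ OddHtD m v ∧ actBG σ v ∈ negD (m + 2)}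

section Aux
variable {n : ℕ}

lemma ee_self (i : Fin n) : ee i i = 1 := by simp [ee]

lemma ee_ne {i j : Fin n} (h : j ≠ i) : ee i j = 0 := by simp [ee, h]

/-- the height functional -/
noncomputable def htf {n : ℕ} (v : Fin n → ℝ) : ℝ := ∑ j : Fin n, (j : ℝ) * v j

lemma htf_ee (i : Fin n) : htf (ee i) = i := by
  simp [htf, ee, mul_ite]

lemma htf_add (u v : Fin n → ℝ) : htf (u + v) = htf u + htf v := by
  simp [htf, mul_add, Finset.sum_add_distrib]

lemma htf_sub (u v : Fin n → ℝ) : htf (u - v) = htf u - htf v := by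
  simp [htf, mul_sub, Finset.sum_sub_distrib]

lemma htf_sum (c : Fin n → ℝ) (w : Fin n → Fin n → ℝ) :
    htf (∑ k, c k • w k) = ∑ k, c k * htf (w k) := by
  unfold htf
  simp only [Finset.sum_apply, Pi.smul_apply, smul_eq_mul, Finset.mul_sum]
  rw [Finset.sum_comm]
  exact Finset.sum_congr rfl fun k _ => Finset.sum_congr rfl fun j _ => by ring

lemma htf_delta (m : ℕ) (k : Fin (m + 2)) : htf (deltaD m k) = 1 := by
  unfold deltaD
  by_cases hk : k.val = 0
  · rw [if_pos hk, htf_add, htf_ee, htf_ee]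
    norm_num [Fin.val_one]
  · rw [if_neg hk, htf_sub, htf_ee, htf_ee]
    obtain ⟨t, ht⟩ : ∃ t, k.val = t + 1 := ⟨k.val - 1, by omega⟩
    simp [ht]

lemma sum_eq_htf {m : ℕ} (v : Fin (m + 2) → ℝ) (c : Fin (m + 2) → ℝ)
    (h : v = ∑ k, c k • deltaD m k) : ∑ k, c k = htf v := by
  rw [h, htf_sum]
  simp [htf_delta]

end Aux
section Span
variable {m : ℕ}

lemma deltaD_zero (m : ℕ) : deltaD m 0 = ee 0 + ee 1 := by simp [deltaD]

lemma deltaD_pos (m : ℕ) (k : Fin (m + 2)) (hk : k.val ≠ 0) :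
    deltaD m k = ee k - ee ⟨k.val - 1, Nat.lt_of_le_of_lt (Nat.sub_le _ _) k.isLt⟩ := by
  simp [deltaD, hk]

lemma ee_mem_span (m : ℕ) (t : Fin (m + 2)) :
    ee t ∈ Submodule.span ℝ (Set.range (deltaD m)) := by
  have h0 : ee (0 : Fin (m + 2)) ∈ Submodule.span ℝ (Set.range (deltaD m)) := by
    have he : ee (0 : Fin (m + 2)) =
        (1/2 : ℝ) • deltaD m 0 - (1/2 : ℝ) • deltaD m 1 := by
      rw [deltaD_zero, deltaD_pos m 1 (by simp [Fin.val_one])]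
      have : (⟨(1 : Fin (m+2)).val - 1, Nat.lt_of_le_of_lt (Nat.sub_le _ _) (1 : Fin (m+2)).isLt⟩ : Fin (m + 2)) = 0 := by
        ext; simp [Fin.val_one]
      rw [this]
      show ee 0 = (1/2 : ℝ) • (ee 0 + ee 1) - (1/2 : ℝ) • (ee 1 - ee 0)
      module
    rw [he]
    exact sub_mem (Submodule.smul_mem _ _ (Submodule.subset_span ⟨0, rfl⟩))
      (Submodule.smul_mem _ _ (Submodule.subset_span ⟨1, rfl⟩))
  obtain ⟨s, hs⟩ := t
  induction s with
  | zero => exact h0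
  | succ s ih =>
    have hs' : s < m + 2 := by omega
    have key : ee (⟨s + 1, hs⟩ : Fin (m + 2)) =
        ee (⟨s, hs'⟩ : Fin (m + 2)) + deltaD m ⟨s + 1, hs⟩ := by
      rw [deltaD_pos m ⟨s + 1, hs⟩ (by simp)]
      have : (⟨(⟨s+1, hs⟩ : Fin (m+2)).val - 1, Nat.lt_of_le_of_lt (Nat.sub_le _ _) (⟨s+1, hs⟩ : Fin (m+2)).isLt⟩ : Fin (m + 2)) = ⟨s, hs'⟩ := by
        ext; simp
      rw [this]; abel
    rw [key]
    exact add_mem (ih hs') (Submodule.subset_span ⟨_, rfl⟩)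

lemma oddHtD_iff {m : ℕ} (v : Fin (m + 2) → ℝ)
    (hv : v ∈ Submodule.span ℝ (Set.range (deltaD m))) (z : ℤ) (hz : htf v = (z : ℝ)) :
    OddHtD m v ↔ Odd z := by
  constructor
  · intro h
    obtain ⟨c, hc⟩ := (Submodule.mem_span_range_iff_exists_fun ℝ).mp hv
    obtain ⟨t, ht, hsum⟩ := h c hc.symm
    have : (t : ℝ) = (z : ℝ) := by rw [← hsum, sum_eq_htf _ _ hc.symm, hz]
    rwa [show z = t from by exact_mod_cast this.symm]
  · intro h c hc
    exact ⟨z, h, by rw [sum_eq_htf _ _ hc, hz]⟩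

end Span
section Roots
variable {n : ℕ}

lemma ee_sub_eq_iff {a b i j : Fin n} (hab : a ≠ b) (hij : i ≠ j) :
    ee b - ee a = ee j - ee i ↔ a = i ∧ b = j := by
  constructor
  · intro h
    have ha := congrFun h a
    have hb := congrFun h b
    simp only [Pi.sub_apply, ee, if_pos rfl, if_neg hab, if_neg hab.symm] at ha hb
    split_ifs at ha hb <;> norm_num at ha <;> norm_num at hb <;> exact ⟨by assumption, by assumption⟩
  · rintro ⟨rfl, rfl⟩; rfl

lemma ee_add_eq_iff {a b i j : Fin n} (hab : a ≠ b) (hij : i ≠ j) :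
    ee a + ee b = ee i + ee j ↔ (a = i ∧ b = j) ∨ (a = j ∧ b = i) := by
  constructor
  · intro h
    have ha := congrFun h a
    have hb := congrFun h b
    simp only [Pi.add_apply, ee, if_pos rfl, if_neg hab, if_neg hab.symm] at ha hb
    split_ifs at ha hb <;> norm_num at ha <;> norm_num at hb <;>
      first
        | exact Or.inl ⟨by assumption, by assumption⟩
        | exact Or.inr ⟨by assumption, by assumption⟩
        | (exfalso; exact hab (by subst_vars; rfl))
  · rintro (⟨rfl, rfl⟩ | ⟨rfl, rfl⟩)
    · rfl
    · abel

lemma ee_sub_ne_add {a b i j : Fin n} (hab : a ≠ b) : ee b - ee a ≠ ee i + ee j := by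
  intro h
  have ha := congrFun h a
  simp only [Pi.sub_apply, Pi.add_apply, ee, if_pos rfl, if_neg hab] at ha
  split_ifs at ha <;> norm_num at ha

lemma neg_neg_ne_sub {a b i j : Fin n} (hij : i ≠ j) : -ee a - ee b ≠ ee j - ee i := by
  intro h
  have hj := congrFun h j
  simp only [Pi.sub_apply, Pi.neg_apply, ee, if_pos rfl, if_neg hij.symm] at hj
  split_ifs at hj <;> norm_num at hj

lemma neg_neg_ne_add {a b i j : Fin n} (hij : i ≠ j) : -ee a - ee b ≠ ee i + ee j := by
  intro h
  have hj := congrFun h j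
  simp only [Pi.sub_apply, Pi.add_apply, Pi.neg_apply, ee, if_pos rfl, if_neg hij.symm] at hj
  split_ifs at hj <;> norm_num at hj

lemma sub_mem_posD_iff {a b : Fin n} (hab : a ≠ b) : (ee b - ee a ∈ posD n) ↔ a < b := by
  constructor
  · rintro (⟨i, j, hij, h⟩ | ⟨i, j, hij, h⟩)
    · obtain ⟨rfl, rfl⟩ := (ee_sub_eq_iff hab hij.ne).mp h
      exact hij
    · exact absurd h (ee_sub_ne_add hab)
  · intro h; exact Or.inl ⟨a, b, h, rfl⟩

lemma add_mem_posD {a b : Fin n} (hab : a ≠ b) : ee a + ee b ∈ posD n := by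
  rcases lt_or_gt_of_ne hab with h | h
  · exact Or.inr ⟨a, b, h, rfl⟩
  · exact Or.inr ⟨b, a, h, by abel⟩

lemma neg_neg_not_mem_posD {a b : Fin n} : -ee a - ee b ∉ posD n := by
  rintro (⟨i, j, hij, h⟩ | ⟨i, j, hij, h⟩)
  · exact neg_neg_ne_sub hij.ne h
  · exact neg_neg_ne_add hij.ne h

end Roots
section Act
variable {n : ℕ}

lemma actBG_sub (σ : BG n) (u v : Fin n → ℝ) :
    actBG σ (u - v) = actBG σ u - actBG σ v := by
  funext j; simp [actBG, mul_sub]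

lemma actBG_add (σ : BG n) (u v : Fin n → ℝ) :
    actBG σ (u + v) = actBG σ u + actBG σ v := by
  funext j; simp [actBG, mul_add]

lemma actBG_ee (σ : BG n) (i : Fin n) :
    actBG σ (ee i) = (if σ.2 i then (-1 : ℝ) else 1) • ee (σ.1 i) := by
  funext j
  by_cases h : σ.1.symm j = i
  · have hj : j = σ.1 i := (Equiv.symm_apply_eq σ.1).mp h
    simp [actBG, ee, h, hj]
  · have hj : j ≠ σ.1 i := fun hc => h ((Equiv.symm_apply_eq σ.1).mpr hc)
    simp [actBG, ee, h, hj]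

lemma act_sub_neg_iff (σ : BG n) {i j : Fin n} (hij : i ≠ j) :
    actBG σ (ee j - ee i) ∈ negD n ↔ wval σ j < wval σ i := by
  have hab : σ.1 i ≠ σ.1 j := fun h => hij (σ.1.injective h)
  show -(actBG σ (ee j - ee i)) ∈ posD n ↔ _
  rw [actBG_sub, actBG_ee, actBG_ee]
  unfold wval
  rcases hsi : σ.2 i <;> rcases hsj : σ.2 j <;> norm_num
  · rw [sub_mem_posD_iff hab.symm]
  · exact iff_of_true (add_mem_posD hab) (by omega)
  · refine iff_of_false ?_ (by omega)
    rw [show -ee (σ.1 i) + -ee (σ.1 j) = -ee (σ.1 i) - ee (σ.1 j) from by abel]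
    exact neg_neg_not_mem_posD
  · rw [show -ee (σ.1 i) + ee (σ.1 j) = ee (σ.1 j) - ee (σ.1 i) from by abel,
      sub_mem_posD_iff hab, Fin.lt_def]
    omega

lemma act_add_neg_iff (σ : BG n) {i j : Fin n} (hij : i ≠ j) :
    actBG σ (ee i + ee j) ∈ negD n ↔ wval σ i + wval σ j < 0 := by
  have hab : σ.1 i ≠ σ.1 j := fun h => hij (σ.1.injective h)
  show -(actBG σ (ee i + ee j)) ∈ posD n ↔ _
  rw [actBG_add, actBG_ee, actBG_ee]
  unfold wval
  rcases hsi : σ.2 i <;> rcases hsj : σ.2 j <;> norm_num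
  · refine iff_of_false ?_ (by omega)
    rw [show -ee (σ.1 j) + -ee (σ.1 i) = -ee (σ.1 j) - ee (σ.1 i) from by abel]
    exact neg_neg_not_mem_posD
  · rw [show ee (σ.1 j) + -ee (σ.1 i) = ee (σ.1 j) - ee (σ.1 i) from by abel,
      sub_mem_posD_iff hab, Fin.lt_def]
  · rw [show -ee (σ.1 j) + ee (σ.1 i) = ee (σ.1 i) - ee (σ.1 j) from by abel,
      sub_mem_posD_iff hab.symm, Fin.lt_def]
    omega
  · exact iff_of_true (add_mem_posD hab.symm) (by omega)

end Act
section OddHt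
variable {m : ℕ}

lemma oddht_sub_iff {i j : Fin (m + 2)} (hij : i < j) :
    OddHtD m (ee j - ee i) ↔ ((j : ℕ) - (i : ℕ)) % 2 = 1 := by
  have hij' : (i : ℕ) < (j : ℕ) := hij
  have hsp : ee j - ee i ∈ Submodule.span ℝ (Set.range (deltaD m)) :=
    sub_mem (ee_mem_span m j) (ee_mem_span m i)
  have hz : htf (ee j - ee i) = (((j : ℕ) : ℤ) - ((i : ℕ) : ℤ) : ℤ) := by
    rw [htf_sub, htf_ee, htf_ee]; push_cast; ring
  rw [oddHtD_iff _ hsp _ hz, Int.odd_iff]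
  omega

lemma oddht_add_iff {i j : Fin (m + 2)} (hij : i < j) :
    OddHtD m (ee i + ee j) ↔ ((j : ℕ) - (i : ℕ)) % 2 = 1 := by
  have hij' : (i : ℕ) < (j : ℕ) := hij
  have hsp : ee i + ee j ∈ Submodule.span ℝ (Set.range (deltaD m)) :=
    add_mem (ee_mem_span m i) (ee_mem_span m j)
  have hz : htf (ee i + ee j) = (((i : ℕ) : ℤ) + ((j : ℕ) : ℤ) : ℤ) := by
    rw [htf_add, htf_ee, htf_ee]; push_cast; ring
  rw [oddHtD_iff _ hsp _ hz, Int.odd_iff]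
  omega

end OddHt
theorem heights_and_oddLength_typeD (m : ℕ) :
    (∀ i j : Fin (m + 2), i < j →
      ∀ c : Fin (m + 2) → ℝ, ee j - ee i = ∑ k, c k • deltaD m k →
        ∑ k, c k = (((j : ℕ) - (i : ℕ) : ℕ) : ℝ)) ∧
    (∀ i j : Fin (m + 2), i < j →
      ∀ c : Fin (m + 2) → ℝ, ee i + ee j = ∑ k, c k • deltaD m k →
        ∑ k, c k = (((i : ℕ) + (j : ℕ) : ℕ) : ℝ)) ∧
    (∀ σ : BG (m + 2), Even (nnegB σ) → LD m σ = oinvB σ + onspB σ) := by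
  refine ⟨?_, ?_, ?_⟩
  · intro i j hij c h
    have h2 : (i : ℕ) ≤ (j : ℕ) := le_of_lt hij
    rw [sum_eq_htf _ _ h, htf_sub, htf_ee, htf_ee, Nat.cast_sub h2]
  · intro i j hij c h
    rw [sum_eq_htf _ _ h, htf_add, htf_ee, htf_ee, Nat.cast_add]
  · intro σ _
    classical
    have hdisj : Disjoint
        (((pairsF (m+2)).filter fun p => wval σ p.2 < wval σ p.1 ∧ (p.2.val - p.1.val) % 2 = 1).image
          (fun p => ee p.2 - ee p.1))
        (((pairsF (m+2)).filter fun p => wval σ p.1 + wval σ p.2 < 0 ∧ (p.2.val - p.1.val) % 2 = 1).image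
          (fun p => ee p.1 + ee p.2)) := by
      rw [Finset.disjoint_left]
      intro v h1 h2
      obtain ⟨p, hp, rfl⟩ := Finset.mem_image.mp h1
      obtain ⟨q, hq, he⟩ := Finset.mem_image.mp h2
      have hpp : p.1 < p.2 := (Finset.mem_filter.mp ((Finset.mem_filter.mp hp).1)).2
      exact ee_sub_ne_add hpp.ne he.symm
    have hinj1 : Set.InjOn (fun p : Fin (m+2) × Fin (m+2) => ee p.2 - ee p.1)
        ((pairsF (m+2)).filter fun p => wval σ p.2 < wval σ p.1 ∧ (p.2.val - p.1.val) % 2 = 1) := by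
      intro p hp q hq h
      simp only [Finset.coe_filter, Set.mem_setOf_eq, pairsF, Finset.mem_filter,
        Finset.mem_univ, true_and] at hp hq
      obtain ⟨h1, h2⟩ := (ee_sub_eq_iff hp.1.ne hq.1.ne).mp h
      exact Prod.ext h1 h2
    have hinj2 : Set.InjOn (fun p : Fin (m+2) × Fin (m+2) => ee p.1 + ee p.2)
        ((pairsF (m+2)).filter fun p => wval σ p.1 + wval σ p.2 < 0 ∧ (p.2.val - p.1.val) % 2 = 1) := by
      intro p hp q hq h
      simp only [Finset.coe_filter, Set.mem_setOf_eq, pairsF, Finset.mem_filter,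
        Finset.mem_univ, true_and] at hp hq
      rcases (ee_add_eq_iff hp.1.ne hq.1.ne).mp h with ⟨h1, h2⟩ | ⟨h1, h2⟩
      · exact Prod.ext h1 h2
      · exfalso
        have := hp.1; have := hq.1
        rw [Fin.lt_def] at *
        omega
    have hset : {v | v ∈ posD (m+2) ∧ OddHtD m v ∧ actBG σ v ∈ negD (m+2)} =
        ((((pairsF (m+2)).filter fun p => wval σ p.2 < wval σ p.1 ∧ (p.2.val - p.1.val) % 2 = 1).image
            (fun p => ee p.2 - ee p.1) ∪
          ((pairsF (m+2)).filter fun p => wval σ p.1 + wval σ p.2 < 0 ∧ (p.2.val - p.1.val) % 2 = 1).image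
            (fun p => ee p.1 + ee p.2) : Finset _) : Set _) := by
      ext v
      simp only [Set.mem_setOf_eq, Finset.coe_union, Set.mem_union, Finset.coe_image,
        Set.mem_image, Finset.mem_coe, Finset.mem_filter, pairsF, Finset.mem_univ, true_and]
      constructor
      · rintro ⟨hpos, hodd, hneg⟩
        rcases hpos with ⟨i, j, hij, rfl⟩ | ⟨i, j, hij, rfl⟩
        · exact Or.inl ⟨(i, j), ⟨hij, (act_sub_neg_iff σ hij.ne).mp hneg,
            (oddht_sub_iff hij).mp hodd⟩, rfl⟩
        · exact Or.inr ⟨(i, j), ⟨hij, (act_add_neg_iff σ hij.ne).mp hneg,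
            (oddht_add_iff hij).mp hodd⟩, rfl⟩
      · rintro (⟨p, ⟨hlt, hw, hpar⟩, rfl⟩ | ⟨p, ⟨hlt, hw, hpar⟩, rfl⟩)
        · exact ⟨Or.inl ⟨p.1, p.2, hlt, rfl⟩, (oddht_sub_iff hlt).mpr hpar,
            (act_sub_neg_iff σ hlt.ne).mpr hw⟩
        · exact ⟨Or.inr ⟨p.1, p.2, hlt, rfl⟩, (oddht_add_iff hlt).mpr hpar,
            (act_add_neg_iff σ hlt.ne).mpr hw⟩
    show Set.ncard _ = _
    rw [hset, Set.ncard_coe_finset, Finset.card_union_of_disjoint hdisj,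
      Finset.card_image_of_injOn hinj1, Finset.card_image_of_injOn hinj2]
    rfl
end

section
/- Let n ≥ 2 and σ ∈ B_{n−1}, and define σ̌ ∈ B_n by σ̌ = [−n, σ(1),…,σ(n−1)]. Then oneg(σ̌) = eneg(σ) + 1, eneg(σ̌) = oneg(σ), oinv(σ̌) = oinv(σ), einv(σ̌) = einv(σ), onsp(σ̌) = onsp(σ) + ⌈(n−1)/2⌉, and ensp(σ̌) = ensp(σ) + ⌊(n−1)/2⌋. -/
open Finset

section Aux

lemma count_odd (m : ℕ) :
    (∑ j : Fin m, if (j.val + 1) % 2 = 1 then 1 else 0) = (m + 1) / 2 := by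
  induction m with
  | zero => simp
  | succ k ih =>
    rw [Fin.sum_univ_castSucc]
    simp only [Fin.val_last, Fin.coe_castSucc]
    rw [ih]
    rcases Nat.mod_two_eq_zero_or_one (k + 1) with h | h <;> simp [h] <;> omega

lemma count_even (m : ℕ) :
    (∑ j : Fin m, if (j.val + 1) % 2 = 0 then 1 else 0) = m / 2 := by
  induction m with
  | zero => simp
  | succ k ih =>
    rw [Fin.sum_univ_castSucc]
    simp only [Fin.val_last, Fin.coe_castSucc]
    rw [ih]
    rcases Nat.mod_two_eq_zero_or_one (k + 1) with h | h <;> simp [h] <;> omega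

lemma univ_card_succ {m : ℕ} (P : Fin (m + 1) → Prop) [DecidablePred P] :
    (univ.filter P).card
      = (if P 0 then 1 else 0) + (univ.filter fun i : Fin m => P i.succ).card := by
  rw [Finset.card_filter, Finset.card_filter, Fin.sum_univ_succ]

lemma pairs_card_succ {m : ℕ} (C : Fin (m + 1) × Fin (m + 1) → Prop) [DecidablePred C] :
    ((pairsF (m + 1)).filter C).card
      = (univ.filter fun j : Fin m => C (0, j.succ)).card
        + ((pairsF m).filter fun p => C (p.1.succ, p.2.succ)).card := by
  classical
  simp only [pairsF, Finset.filter_filter, Finset.card_filter]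
  rw [Fintype.sum_prod_type, Fintype.sum_prod_type, Fin.sum_univ_succ]
  congr 1
  · rw [Fin.sum_univ_succ]
    simp [Fin.succ_pos]
  · refine Finset.sum_congr rfl fun i _ => ?_
    rw [Fin.sum_univ_succ]
    simp [Fin.succ_lt_succ_iff, Fin.not_lt_zero]

lemma wval_bound {m : ℕ} (σ : BG m) (i : Fin m) :
    -(m : ℤ) ≤ wval σ i ∧ wval σ i ≤ m := by
  have h : (σ.1 i : ℤ) < m := by exact_mod_cast (σ.1 i).is_lt
  have h0 : (0 : ℤ) ≤ (σ.1 i : ℤ) := by positivity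
  unfold wval
  rcases σ.2 i with _ | _ <;> simp <;> omega

end Aux

/-- Lemma 3.3: prepending `-n` to a signed permutation of `[n-1]`.  Here `n = m+1`,
`σ ∈ B_m` and `τ = σ̌ = [-(m+1), σ(1), …, σ(m)] ∈ B_{m+1}`. -/
theorem stats_prepend_neg (m : ℕ) (hm : 1 ≤ m) (σ : BG m) (τ : BG (m + 1))
    (hw : ∀ i : Fin m, wval τ i.succ = wval σ i)
    (hfirst : wval τ 0 = -((m : ℤ) + 1)) :
    onegB τ = enegB σ + 1 ∧
    enegB τ = onegB σ ∧
    oinvB τ = oinvB σ ∧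
    einvB τ = einvB σ ∧
    onspB τ = onspB σ + (m + 1) / 2 ∧
    enspB τ = enspB σ + m / 2 := by
  have hb : ∀ i : Fin m, -(m : ℤ) ≤ wval σ i ∧ wval σ i ≤ m := wval_bound σ
  have hfneg : ∀ i : Fin m, wval τ 0 + wval σ i < 0 := by
    intro i; rw [hfirst]; have := (hb i).2; omega
  have hnoinv : ∀ i : Fin m, ¬ wval σ i < wval τ 0 := by
    intro i; rw [hfirst]; have := (hb i).1; omega
  refine ⟨?_, ?_, ?_, ?_, ?_, ?_⟩
  · -- oneg
    unfold onegB enegB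
    rw [univ_card_succ]
    have h0 : wval τ 0 < 0 ∧ ((0 : Fin (m+1)).val + 1) % 2 = 1 := by
      rw [hfirst]; exact ⟨by omega, by simp⟩
    rw [if_pos h0]
    have hset : (univ.filter fun i : Fin m =>
        wval τ i.succ < 0 ∧ ((i.succ : Fin (m+1)).val + 1) % 2 = 1)
        = univ.filter fun i : Fin m => wval σ i < 0 ∧ (i.val + 1) % 2 = 0 := by
      refine Finset.filter_congr fun i _ => ?_
      rw [hw]
      simp only [Fin.val_succ]
      constructor <;> rintro ⟨h1, h2⟩ <;> exact ⟨h1, by omega⟩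
    rw [hset]; omega
  · -- eneg
    unfold enegB onegB
    rw [univ_card_succ]
    have h0 : ¬ (wval τ 0 < 0 ∧ ((0 : Fin (m+1)).val + 1) % 2 = 0) := by simp
    rw [if_neg h0, Nat.zero_add]
    refine congrArg Finset.card (Finset.filter_congr fun i _ => ?_)
    rw [hw]
    simp only [Fin.val_succ]
    constructor <;> rintro ⟨h1, h2⟩ <;> exact ⟨h1, by omega⟩
  · -- oinv
    unfold oinvB
    rw [pairs_card_succ]
    have h1 : (univ.filter fun j : Fin m =>
        wval τ j.succ < wval τ (0 : Fin (m+1)) ∧ (j.succ.val - (0:Fin (m+1)).val) % 2 = 1) = ∅ := by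
      refine Finset.filter_false_of_mem fun j _ => ?_
      rw [hw]
      exact fun h => hnoinv j h.1
    rw [h1]
    simp only [Finset.card_empty, Nat.zero_add]
    refine congrArg Finset.card (Finset.filter_congr fun p _ => ?_)
    rw [hw, hw]
    simp only [Fin.val_succ]
    constructor <;> rintro ⟨a, b⟩ <;> exact ⟨a, by omega⟩
  · -- einv
    unfold einvB
    rw [pairs_card_succ]
    have h1 : (univ.filter fun j : Fin m =>
        wval τ j.succ < wval τ (0 : Fin (m+1)) ∧ (j.succ.val - (0:Fin (m+1)).val) % 2 = 0) = ∅ := by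
      refine Finset.filter_false_of_mem fun j _ => ?_
      rw [hw]
      exact fun h => hnoinv j h.1
    rw [h1]
    simp only [Finset.card_empty, Nat.zero_add]
    refine congrArg Finset.card (Finset.filter_congr fun p _ => ?_)
    rw [hw, hw]
    simp only [Fin.val_succ]
    constructor <;> rintro ⟨a, b⟩ <;> exact ⟨a, by omega⟩
  · -- onsp
    unfold onspB
    rw [pairs_card_succ]
    have h2 : ((pairsF m).filter fun p : Fin m × Fin m =>
        wval τ (p.1.succ, p.2.succ).1 + wval τ (p.1.succ, p.2.succ).2 < 0 ∧
          ((p.1.succ, p.2.succ).2.val - (p.1.succ, p.2.succ).1.val) % 2 = 1)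
        = (pairsF m).filter fun p => wval σ p.1 + wval σ p.2 < 0 ∧ (p.2.val - p.1.val) % 2 = 1 := by
      refine Finset.filter_congr fun p _ => ?_
      dsimp only
      rw [hw, hw]
      simp only [Fin.val_succ]
      constructor <;> rintro ⟨a, b⟩ <;> exact ⟨a, by omega⟩
    have h1 : (univ.filter fun j : Fin m =>
        wval τ (0 : Fin (m+1)) + wval τ j.succ < 0 ∧ (j.succ.val - (0:Fin (m+1)).val) % 2 = 1)
        = univ.filter fun j : Fin m => (j.val + 1) % 2 = 1 := by
      refine Finset.filter_congr fun j _ => ?_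
      rw [hw]
      simp only [Fin.val_succ, Nat.sub_zero]
      exact ⟨fun h => h.2, fun b => ⟨hfneg j, b⟩⟩
    rw [h1, h2, Finset.card_filter, count_odd]
    omega
  · -- ensp
    unfold enspB
    rw [pairs_card_succ]
    have h2 : ((pairsF m).filter fun p : Fin m × Fin m =>
        wval τ (p.1.succ, p.2.succ).1 + wval τ (p.1.succ, p.2.succ).2 < 0 ∧
          ((p.1.succ, p.2.succ).2.val - (p.1.succ, p.2.succ).1.val) % 2 = 0)
        = (pairsF m).filter fun p => wval σ p.1 + wval σ p.2 < 0 ∧ (p.2.val - p.1.val) % 2 = 0 := by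
      refine Finset.filter_congr fun p _ => ?_
      dsimp only
      rw [hw, hw]
      simp only [Fin.val_succ]
      constructor <;> rintro ⟨a, b⟩ <;> exact ⟨a, by omega⟩
    have h1 : (univ.filter fun j : Fin m =>
        wval τ (0 : Fin (m+1)) + wval τ j.succ < 0 ∧ (j.succ.val - (0:Fin (m+1)).val) % 2 = 0)
        = univ.filter fun j : Fin m => (j.val + 1) % 2 = 0 := by
      refine Finset.filter_congr fun j _ => ?_
      rw [hw]
      simp only [Fin.val_succ, Nat.sub_zero]
      exact ⟨fun h => h.2, fun b => ⟨hfneg j, b⟩⟩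
    rw [h1, h2, Finset.card_filter, count_even]
    omega
end
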